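/- arXiv:1411.7496 — 2 statements merged into one kernel-verified Lean document; each statement's English description precedes it below -/
import Mathlib

section
/- Let (W,S) be a Coxeter system and let s, t, u ∈ S be pairwise distinct generators such that the orders m_{st}, m_{tu}, m_{us} of st, tu and us are each at least 3 (possibly infinite). Then the subgroup of W generated by the two elements u and tst is infinite. -/
/-!
Let `s_i` act on `ℝ^(B)` by the reflection in `e_i` for the form `(e_i, e_j) = -cos (π / m_ij)`
(Tits' geometric representation). Then `u · tst` acts as the product of the reflections in the
roots `e_u` and `s_t e_s`, whose mutual pairing is
`-(cos (π / m_us) + 2 cos (π / m_st) cos (π / m_tu))`, at most `-1` as soon as all three cosines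
are at least `1 / 2`. A product of two reflections in roots `x`, `y` with pairing `-c` sends `x`
to `U_{2n}(c) x + U_{2n-1}(c) y` after `n` steps, and `U_n(c) ≥ n + 1` for `c ≥ 1`, so `u · tst`
has infinite order. For `c = cos (π / m)` the same formula shows that the simple reflections
satisfy the Coxeter relations, so the representation exists.
-/

open Polynomial.Chebyshev Real

namespace Polynomial.Chebyshev

variable {K : Type*} [Field K] [LinearOrder K] [IsStrictOrderedRing K]

theorem natCast_add_one_le_U_eval {c : K} (hc : 1 ≤ c) (n : ℕ) :
    (n : K) + 1 ≤ (U K n).eval c := by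
  suffices h : ∀ n : ℕ,
      (n : K) + 1 ≤ (U K n).eval c ∧ (U K n).eval c + 1 ≤ (U K (n + 1)).eval c from (h n).1
  intro n
  induction n with
  | zero => simpa [U_one, one_add_one_eq_two] using hc
  | succ n ih =>
    obtain ⟨ih₁, ih₂⟩ := ih
    refine ⟨by push_cast; linarith, ?_⟩
    have hrec := congrArg (Polynomial.eval c) (U_add_two K n)
    simp only [Polynomial.eval_sub, Polynomial.eval_mul, Polynomial.eval_X,
      Polynomial.eval_ofNat] at hrec
    push_cast
    rw [show ((n : ℤ) + 1 + 1) = n + 2 by ring, hrec]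
    nlinarith

theorem U_eval_cos_pi_div {m : ℕ} (hm : 2 ≤ m) :
    (U ℝ (2 * m)).eval (cos (π / m)) = 1 ∧ (U ℝ (2 * m - 1)).eval (cos (π / m)) = 0 := by
  have hm' : (2 : ℝ) ≤ m := by exact_mod_cast hm
  have hsin : sin (π / m) ≠ 0 :=
    (sin_pos_of_pos_of_lt_pi (by positivity) (div_lt_self pi_pos (by linarith))).ne'
  constructor
  · apply mul_right_cancel₀ hsin
    rw [U_real_cos, one_mul]
    conv_rhs => rw [← sin_add_two_pi]
    congr 1
    field_simp
    push_cast
    ring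
  · apply mul_right_cancel₀ hsin
    rw [U_real_cos, zero_mul, ← sin_two_pi]
    congr 1
    field_simp
    push_cast
    ring

end Polynomial.Chebyshev

namespace Module

section CommRing

variable {R M : Type*} [CommRing R] [AddCommGroup M] [Module R M]
  {x y : M} {f g : Dual R M}

theorem conj_reflection (e : M ≃ₗ[R] M) (hf : f x = 2) :
    e * reflection hf * e⁻¹ =
      reflection (x := e x) (f := f ∘ₗ e.symm.toLinearMap) (by simpa using hf) := by
  ext z
  simp [reflection_apply]

theorem reflection_mul_reflection_pow_apply_self_eq_U (hf : f x = 2) (hg : g y = 2) {c : R}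
    (hfy : f y = -2 * c) (hgx : g x = -2 * c) (n : ℕ) :
    ((reflection hf * reflection hg) ^ n) x =
      (U R (2 * n)).eval c • x + (U R (2 * n - 1)).eval c • y := by
  induction n with
  | zero => simp
  | succ n ih =>
    have h₁ := congrArg (Polynomial.eval c) (U_add_one R (2 * n))
    have h₂ := congrArg (Polynomial.eval c) (U_add_one R (2 * n + 1))
    simp only [Polynomial.eval_sub, Polynomial.eval_mul, Polynomial.eval_X,
      Polynomial.eval_ofNat, add_sub_cancel_right] at h₁ h₂
    rw [pow_succ', LinearEquiv.mul_apply, ih, LinearEquiv.mul_apply]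
    simp only [reflection_apply, map_add, map_sub, map_smul, hf, hg, hfy, hgx]
    rw [Nat.cast_succ, show 2 * ((n : ℤ) + 1) = 2 * n + 1 + 1 by ring, add_sub_cancel_right,
      h₂, h₁]
    module

end CommRing

section Field

variable {K M : Type*} [Field K] [AddCommGroup M] [Module K M]
  {x y : M} {f g : Dual K M}

theorem reflection_mul_reflection_pow_eq_one (hf : f x = 2) (hg : g y = 2)
    (hfg : f y * g x ≠ 4) {m : ℕ} (hx : ((reflection hf * reflection hg) ^ m) x = x)
    (hy : ((reflection hg * reflection hf) ^ m) y = y) :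
    (reflection hf * reflection hg) ^ m = 1 := by
  have hy' : ((reflection hf * reflection hg) ^ m) y = y := by
    rw [← reflection_inv hf, ← reflection_inv hg, ← mul_inv_rev, inv_pow]
    exact (LinearEquiv.symm_apply_eq _).2 hy.symm
  have hfix {z : M} (hfz : f z = 0) (hgz : g z = 0) :
      ((reflection hf * reflection hg) ^ m) z = z := by
    rw [LinearEquiv.pow_apply]
    exact Function.iterate_fixed (by simp [reflection_apply, hfz, hgz]) m
  have hdet : 4 - f y * g x ≠ 0 := sub_ne_zero.2 hfg.symm
  ext v
  set p := (2 * f v - f y * g v) / (4 - f y * g x)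
  set q := (2 * g v - g x * f v) / (4 - f y * g x)
  have hv : v = p • x + q • y + (v - p • x - q • y) := by abel
  have hfz : f (v - p • x - q • y) = 0 := by
    simp only [map_sub, map_smul, hf, smul_eq_mul, p, q]
    field_simp
    ring
  have hgz : g (v - p • x - q • y) = 0 := by
    simp only [map_sub, map_smul, hg, smul_eq_mul, p, q]
    field_simp
    ring
  rw [hv, map_add, map_add, map_smul, map_smul, hx, hy', hfix hfz hgz, ← hv]
  rfl

theorem not_isOfFinOrder_reflection_mul_reflection [LinearOrder K] [IsStrictOrderedRing K]
    (hf : f x = 2) (hg : g y = 2) {c : K} (hc : 1 ≤ c)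
    (hfy : f y = -2 * c) (hgx : g x = -2 * c) (hxy : LinearIndependent K ![x, y]) :
    ¬IsOfFinOrder (reflection hf * reflection hg) := by
  rw [isOfFinOrder_iff_pow_eq_one]
  rintro ⟨n, hn, hpow⟩
  have h := reflection_mul_reflection_pow_apply_self_eq_U hf hg hfy hgx n
  rw [hpow] at h
  have h1 : (U K (2 * n)).eval c = 1 :=
    (hxy.eq_of_pair (h.symm.trans (by rw [one_smul, zero_smul, add_zero]; rfl))).1
  have h2 := natCast_add_one_le_U_eval hc (2 * n)
  push_cast at h2
  have hn₁ : (1 : K) ≤ n := by exact_mod_cast hn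
  linarith

end Field

theorem reflection_mul_reflection_pow_apply_self_of_cos {V : Type*} [AddCommGroup V] [Module ℝ V]
    {x y : V} {f g : Dual ℝ V} (hf : f x = 2) (hg : g y = 2) {m : ℕ} (hm : 2 ≤ m)
    (hfy : f y = -2 * cos (π / m)) (hgx : g x = -2 * cos (π / m)) :
    ((reflection hf * reflection hg) ^ m) x = x := by
  rw [reflection_mul_reflection_pow_apply_self_eq_U hf hg hfy hgx, (U_eval_cos_pi_div hm).1,
    (U_eval_cos_pi_div hm).2, one_smul, zero_smul, add_zero]

end Module

theorem Real.half_le_cos_pi_div {n : ℕ} (hn : n = 0 ∨ 3 ≤ n) : 1 / 2 ≤ cos (π / n) := by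
  rcases hn with rfl | hn
  · norm_num
  · rw [← cos_pi_div_three]
    have hn' : (3 : ℝ) ≤ n := by exact_mod_cast hn
    exact cos_le_cos_of_nonneg_of_le_pi (by positivity) (by linarith [pi_pos])
      (div_le_div_of_nonneg_left pi_pos.le (by norm_num) hn')

namespace CoxeterMatrix

variable {B : Type*} (M : CoxeterMatrix B)

/-- Twice the form `(e_i, ·)`. Since `π / 0 = 0`, the entry `M i j = 0` (that is, `m_ij = ∞`)
gives the coefficient `-2 cos 0 = -2`, as it should. -/
noncomputable def coroot (i : B) : Module.Dual ℝ (B →₀ ℝ) :=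
  Finsupp.linearCombination ℝ fun j ↦ -2 * cos (π / M i j)

@[simp]
theorem coroot_single (i j : B) : M.coroot i (Finsupp.single j 1) = -2 * cos (π / M i j) := by
  simp [coroot]

theorem coroot_single_self (i : B) : M.coroot i (Finsupp.single i 1) = 2 := by
  simp

noncomputable def geometricReflection (i : B) : (B →₀ ℝ) ≃ₗ[ℝ] (B →₀ ℝ) :=
  Module.reflection (M.coroot_single_self i)

theorem geometricReflection_apply (i : B) (v : B →₀ ℝ) :
    M.geometricReflection i v = v - M.coroot i v • Finsupp.single i 1 :=
  Module.reflection_apply _ _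

theorem coroot_geometricReflection_single (i j k : B) :
    M.coroot i (M.geometricReflection j (Finsupp.single k 1)) =
      -2 * cos (π / M i k) - 4 * cos (π / M j k) * cos (π / M i j) := by
  rw [geometricReflection_apply, map_sub, map_smul, coroot_single, coroot_single, coroot_single,
    smul_eq_mul]
  ring

theorem geometricReflection_symm (i : B) :
    (M.geometricReflection i).symm = M.geometricReflection i :=
  rfl

theorem isLiftable_geometricReflection : M.IsLiftable M.geometricReflection := by
  intro i j
  obtain rfl | hij := eq_or_ne i j
  · rw [M.diagonal, pow_one]
    exact LinearEquiv.ext (Module.involutive_reflection (M.coroot_single_self i))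
  obtain h0 | hm := eq_or_ne (M i j) 0
  · rw [h0, pow_zero]
  have hm : 2 ≤ M i j := by have := M.off_diagonal i j hij; omega
  have hm' : (2 : ℝ) ≤ M i j := by exact_mod_cast hm
  have hsin : 0 < sin (π / M i j) :=
    sin_pos_of_pos_of_lt_pi (by positivity) (div_lt_self pi_pos (by linarith))
  have hcos : M.coroot i (Finsupp.single j 1) * M.coroot j (Finsupp.single i 1) ≠ 4 := by
    rw [coroot_single, coroot_single, M.symmetric j i]
    nlinarith [sin_sq_add_cos_sq (π / M i j), hsin]
  refine Module.reflection_mul_reflection_pow_eq_one _ _ hcos ?_ ?_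
  · exact Module.reflection_mul_reflection_pow_apply_self_of_cos _ _ hm (coroot_single ..)
      (by rw [coroot_single, M.symmetric j i])
  · rw [M.symmetric i j] at hm ⊢
    exact Module.reflection_mul_reflection_pow_apply_self_of_cos _ _ hm (coroot_single ..)
      (by rw [coroot_single, M.symmetric i j])

end CoxeterMatrix

namespace CoxeterSystem

variable {B W : Type*} [Group W] {M : CoxeterMatrix B} (cs : CoxeterSystem M W)

noncomputable def geometricRepresentation : W →* (B →₀ ℝ) ≃ₗ[ℝ] (B →₀ ℝ) :=
  cs.lift ⟨M.geometricReflection, M.isLiftable_geometricReflection⟩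

theorem geometricRepresentation_simple (i : B) :
    cs.geometricRepresentation (cs.simple i) = M.geometricReflection i :=
  cs.lift_apply_simple _ i

theorem not_isOfFinOrder_simple_mul_simple_mul_simple_mul_simple {a b c : B}
    (hab : a ≠ b) (hbc : b ≠ c) (hac : a ≠ c)
    (hst : M a b = 0 ∨ 3 ≤ M a b) (htu : M b c = 0 ∨ 3 ≤ M b c)
    (hus : M c a = 0 ∨ 3 ≤ M c a) :
    ¬IsOfFinOrder (cs.simple c * (cs.simple b * cs.simple a * cs.simple b)) := by
  set r := M.geometricReflection
  have hρ : cs.geometricRepresentation (cs.simple c * (cs.simple b * cs.simple a * cs.simple b)) =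
      r c * Module.reflection (x := r b (Finsupp.single a 1))
        (f := M.coroot a ∘ₗ (r b).symm.toLinearMap) (by simp) := by
    simp only [map_mul, geometricRepresentation_simple]
    exact congrArg (r c * ·) (Module.conj_reflection (r b) (M.coroot_single_self a))
  intro hfin
  have hκ : 1 ≤ cos (π / M c a) + 2 * cos (π / M a b) * cos (π / M b c) := by
    nlinarith [Real.half_le_cos_pi_div hst, Real.half_le_cos_pi_div htu,
      Real.half_le_cos_pi_div hus]
  refine Module.not_isOfFinOrder_reflection_mul_reflection _ _ hκ ?_ ?_ ?_
    (hρ ▸ cs.geometricRepresentation.isOfFinOrder hfin)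
  · rw [M.coroot_geometricReflection_single, M.symmetric b a, M.symmetric c b]
    ring
  · rw [LinearMap.comp_apply, LinearEquiv.coe_coe, M.geometricReflection_symm,
      M.coroot_geometricReflection_single, M.symmetric a c, M.symmetric a b]
    ring
  · refine LinearIndependent.pair_iff.2 fun s t hzero ↦ ⟨?_, ?_⟩
    · simpa [r, M.geometricReflection_apply, hac, hbc.symm] using congrArg (· c) hzero
    · simpa [r, M.geometricReflection_apply, hab, hac.symm] using congrArg (· a) hzero

end CoxeterSystem

/-- If the orders `m_{st}, m_{tu}, m_{us}` are each at least `3` (possibly infinite),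
then the subgroup of `W` generated by `u` and `tst` is infinite. -/
theorem infinite_closure_u_tst
    {B : Type*} {W : Type*} [Group W] (M : CoxeterMatrix B) (cs : CoxeterSystem M W)
    (a b c : B) (hab : a ≠ b) (hbc : b ≠ c) (hac : a ≠ c)
    (hst : M a b = 0 ∨ 3 ≤ M a b)
    (htu : M b c = 0 ∨ 3 ≤ M b c)
    (hus : M c a = 0 ∨ 3 ≤ M c a) :
    Infinite (Subgroup.closure
      ({cs.simple c, cs.simple b * cs.simple a * cs.simple b} : Set W)) := by
  set y := cs.simple c * (cs.simple b * cs.simple a * cs.simple b)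
  have hy :
      y ∈ Subgroup.closure ({cs.simple c, cs.simple b * cs.simple a * cs.simple b} : Set W) :=
    mul_mem (Subgroup.subset_closure (by simp)) (Subgroup.subset_closure (by simp))
  have hinf : (Subgroup.zpowers y : Set W).Infinite := infinite_zpowers.2
    (cs.not_isOfFinOrder_simple_mul_simple_mul_simple_mul_simple hab hbc hac hst htu hus)
  exact (hinf.mono (Subgroup.zpowers_le.2 hy)).to_subtype
end

section
/- Let (W,S) be a Fuchsian Coxeter system and let s, t, u ∈ S be pairwise distinct generators with 2 ≤ m_{st} < ∞ and m_{tu} = m_{us} = ∞. Then T_W(vu) = T_W(u) for all v in the standard parabolic subgroup W_{st} generated by {s,t}. -/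
/-!
Lemma (Class IV, part 2): in a Fuchsian Coxeter system, if `s, t, u` are pairwise
distinct generators with `2 ≤ m_{st} < ∞` and `m_{tu} = m_{us} = ∞`, then
`T_W(vu) = T_W(u)` for all `v` in the standard parabolic subgroup `W_{st}`.

`m_{ab} = ∞` is encoded by the Coxeter matrix entry being `0` (the Mathlib convention).
-/

section ConeTypes

variable {B : Type*} {W : Type*} [Group W] {M : CoxeterMatrix B}

/-- The cone type of `w`: `T_W(w) = {z : ℓ(w z) = ℓ(w) + ℓ(z)}`. -/
def coneType (cs : CoxeterSystem M W) (w : W) : Set W :=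
  {z | cs.length (w * z) = cs.length w + cs.length z}

end ConeTypes

/-!
Let `z ∈ T_W(u)`, i.e. `ℓ(uz) = ℓ(z) + 1`, so that `u` is a left descent of `uz`. If `i` and `j`
are both left descents of some element, then `s_i s_j` has finite order: projecting to the
parabolic subgroup `W_{ij}` produces an element with two reduced words of the same length
starting with `i` and with `j`; both alternate, and comparing them gives `(s_i s_j)^ℓ = 1`.
Since `m_{tu} = m_{us} = ∞`, the products `s_t s_u` and `s_s s_u` have infinite order (they act
unipotently in the contragredient of the geometric representation), so neither `s` nor `t` is a
left descent of `uz`. Hence `uz` has minimal length in its coset `W_{st} uz`, and lengths add: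
`ℓ(v u z) = ℓ(v) + ℓ(uz)` for `v ∈ W_{st}`. This is `T_W(u) ⊆ T_W(vu)`; the reverse inclusion is
the triangle inequality. Additivity of length on such cosets follows from the deletion property,
which comes from the exchange condition, proved with Tits' sign representation on `W × ℤ/2`.
-/

section GeometricRepresentation

open Real

theorem iterate_apply_eq_of_rotation {V : Type*} [AddCommGroup V] [Module ℝ V] (T : V → V)
    (y e₁ e₂ : V) (θ : ℝ)
    (hT : ∀ u v : ℝ, T (y + u • e₁ + v • e₂) =
      y + (u * cos θ - v * sin θ) • e₁ + (u * sin θ + v * cos θ) • e₂)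
    (n : ℕ) (u v : ℝ) :
    T^[n] (y + u • e₁ + v • e₂) =
      y + (u * cos (n * θ) - v * sin (n * θ)) • e₁ + (u * sin (n * θ) + v * cos (n * θ)) • e₂ := by
  induction n with
  | zero => simp
  | succ n ih =>
    rw [Function.iterate_succ_apply', ih, hT]
    push_cast
    rw [add_one_mul, cos_add, sin_add]
    match_scalars <;> ring

namespace CoxeterMatrix

variable {B : Type*} (M : CoxeterMatrix B)

/-- For `M i j = 0`, i.e. `m_ij = ∞`, the junk value `π / 0 = 0` gives the correct entry `-1`. -/
noncomputable def cosineForm (i j : B) : ℝ := -cos (π / M i j)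

theorem cosineForm_self (i : B) : M.cosineForm i i = 1 := by simp [cosineForm]

theorem cosineForm_comm (i j : B) : M.cosineForm i j = M.cosineForm j i := by
  rw [cosineForm, M.symmetric, cosineForm]

theorem cosineForm_of_eq_zero {i j : B} (h : M i j = 0) : M.cosineForm i j = -1 := by
  simp [cosineForm, h]

/-- The contragredient of the geometric representation: the form against the `i`-th root is
evaluation at `i`, so no sums over `B` occur and `B` may be infinite. -/
noncomputable def dualReflection (i : B) (f : B → ℝ) : B → ℝ := f - (2 * f i) • M.cosineForm i

@[simp]
theorem dualReflection_apply (i : B) (f : B → ℝ) (k : B) :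
    M.dualReflection i f k = f k - 2 * f i * M.cosineForm i k := by
  simp [dualReflection]

theorem dualReflection_involutive (i : B) : Function.Involutive (M.dualReflection i) := by
  intro f
  ext k
  simp only [dualReflection_apply, cosineForm_self]
  ring

theorem dualReflection_comp_apply_add_smul_add_smul {i j : B} {φ : ℝ} {e₂ y : B → ℝ}
    (hφ : M.cosineForm i j = -cos φ)
    (hj : ∀ k, M.cosineForm j k = sin φ * e₂ k - cos φ * M.cosineForm i k)
    (he₂i : e₂ i = 0) (he₂j : e₂ j = sin φ) (hyi : y i = 0) (hyj : y j = 0) (u v : ℝ) :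
    (M.dualReflection i ∘ M.dualReflection j) (y + u • M.cosineForm i + v • e₂) =
      y + (u * cos (2 * φ) - v * sin (2 * φ)) • M.cosineForm i +
        (u * sin (2 * φ) + v * cos (2 * φ)) • e₂ := by
  ext k
  simp only [Function.comp_apply, dualReflection_apply, Pi.add_apply, Pi.smul_apply, smul_eq_mul,
    hyi, hyj, he₂i, he₂j, hφ, hj, cosineForm_self, cos_two_mul, sin_two_mul]
  linear_combination (-2 * v * e₂ k) * sin_sq_add_cos_sq φ

theorem iterate_dualReflection_comp_eq_self {i j : B} (hij : i ≠ j) (h : M i j ≠ 0)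
    (f : B → ℝ) : (M.dualReflection i ∘ M.dualReflection j)^[M i j] f = f := by
  have hm : (2 : ℝ) ≤ M i j := by
    have := M.off_diagonal i j hij
    exact_mod_cast (by omega : 2 ≤ M i j)
  set φ := π / M i j with hφ
  have hσ : 0 < sin φ := by
    apply sin_pos_of_pos_of_lt_pi (by positivity)
    rw [hφ, div_lt_iff₀ (by positivity)]
    nlinarith [pi_pos]
  have hij' : M.cosineForm i j = -cos φ := rfl
  have hji' : M.cosineForm j i = -cos φ := by rw [← cosineForm_comm, hij']
  -- `s_i s_j` fixes every `y` with `y i = y j = 0`, and rotates the plane spanned by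
  -- `M.cosineForm i` and `e₂` by the angle `2 φ = 2 π / m_ij`.
  set e₂ := (sin φ)⁻¹ • (cos φ • M.cosineForm i + M.cosineForm j) with he₂
  have hj (k : B) : M.cosineForm j k = sin φ * e₂ k - cos φ * M.cosineForm i k := by
    simp only [he₂, Pi.smul_apply, Pi.add_apply, smul_eq_mul]
    field_simp
    ring
  have he₂i : e₂ i = 0 := by simp [he₂, hji', cosineForm_self]
  have he₂j : e₂ j = sin φ := by
    simp only [he₂, Pi.smul_apply, Pi.add_apply, smul_eq_mul, hij', cosineForm_self]
    field_simp
    linear_combination -sin_sq_add_cos_sq φ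
  set y := f - f i • M.cosineForm i - ((sin φ)⁻¹ * (f j + cos φ * f i)) • e₂ with hy
  have hyi : y i = 0 := by simp [hy, he₂i, cosineForm_self]
  have hyj : y j = 0 := by
    simp only [hy, Pi.sub_apply, Pi.smul_apply, smul_eq_mul, hij', he₂j]
    field_simp
    ring
  have hf : f = y + f i • M.cosineForm i + ((sin φ)⁻¹ * (f j + cos φ * f i)) • e₂ := by
    rw [hy]
    abel
  have hangle : (M i j : ℝ) * (2 * φ) = 2 * π := by
    rw [hφ]
    field_simp
  conv_lhs => rw [hf]
  rw [iterate_apply_eq_of_rotation _ y _ e₂ (2 * φ)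
    (M.dualReflection_comp_apply_add_smul_add_smul hij' hj he₂i he₂j hyi hyj), hangle,
    cos_two_pi, sin_two_pi]
  simpa using hf.symm

noncomputable def dualReflectionPerm (i : B) : Equiv.Perm (B → ℝ) :=
  (M.dualReflection_involutive i).toPerm

theorem isLiftable_dualReflectionPerm : M.IsLiftable M.dualReflectionPerm := by
  intro i j
  ext f : 1
  rw [Equiv.Perm.coe_pow, Equiv.Perm.coe_mul, Equiv.Perm.coe_one, id]
  by_cases hij : i = j
  · subst hij
    rw [M.diagonal, Function.iterate_one]
    exact M.dualReflection_involutive i f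
  by_cases h : M i j = 0
  · simp [h]
  exact M.iterate_dualReflection_comp_eq_self hij h f

end CoxeterMatrix

end GeometricRepresentation

namespace CoxeterSystem

variable {B W : Type*} [Group W] {M : CoxeterMatrix B} (cs : CoxeterSystem M W)

local prefix:100 "s " => cs.simple
local prefix:100 "π " => cs.wordProd
local prefix:100 "ℓ " => cs.length
local prefix:100 "lis " => cs.leftInvSeq

open List

theorem simple_mul_mul_simple_eq_simple_iff (i : B) (t : W) : s i * t * s i = s i ↔ t = s i := by
  constructor
  · intro h
    simpa [mul_assoc] using congrArg (fun x => s i * x * s i) h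
  · rintro rfl
    simp

theorem prod_map_alternatingWord_two_mul {G : Type*} [Monoid G] (f : B → G) (i j : B) (m : ℕ) :
    ((alternatingWord i j (2 * m)).map f).prod = (f i * f j) ^ m := by
  induction m with
  | zero => simp [alternatingWord]
  | succ m ih =>
    rw [show 2 * (m + 1) = 2 * m + 1 + 1 by ring, alternatingWord_succ', alternatingWord_succ']
    simp [ih, parity_simps, pow_succ', mul_assoc]

theorem leftInvSeq_cons (i : B) (ω : List B) :
    lis (i :: ω) = s i :: (lis ω).map (MulAut.conj (s i)) := rfl

theorem leftInvSeq_braid_drop_eq_take (i j : B) :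
    (lis (alternatingWord i j (2 * M i j))).drop (M i j) =
      (lis (alternatingWord i j (2 * M i j))).take (M i j) := by
  refine ext_getElem (by simp; omega) fun k h₁ _ => ?_
  simp only [length_drop, length_leftInvSeq, length_alternatingWord] at h₁
  rw [getElem_drop, getElem_take, cs.getElem_leftInvSeq_alternatingWord i j _ _ (by omega),
    cs.getElem_leftInvSeq_alternatingWord i j _ _ (by omega), prod_alternatingWord_eq_mul_pow,
    prod_alternatingWord_eq_mul_pow, show (2 * (M i j + k) + 1) / 2 = M i j + k by omega,
    show (2 * k + 1) / 2 = k by omega, pow_add, simple_mul_simple_pow', one_mul]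
  simp [parity_simps]

section SignRepresentation

variable [DecidableEq W]

/-- Tits' sign representation of `W`, the source of the exchange condition. -/
def signFlip (i : B) (p : W × ZMod 2) : W × ZMod 2 :=
  (s i * p.1 * s i, p.2 + if p.1 = s i then 1 else 0)

theorem signFlip_involutive (i : B) : Function.Involutive (cs.signFlip i) := by
  rintro ⟨t, e⟩
  simp only [signFlip, Prod.mk.injEq, cs.simple_mul_mul_simple_eq_simple_iff]
  refine ⟨by simp [← mul_assoc], ?_⟩
  split_ifs
  · rw [add_assoc, (by decide : (1 : ZMod 2) + 1 = 0), add_zero]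
  · simp

def signPerm (i : B) : Equiv.Perm (W × ZMod 2) := (cs.signFlip_involutive i).toPerm

theorem count_leftInvSeq_cons (i : B) (ω : List B) (u : W) :
    (lis (i :: ω)).count (s i * u * s i) = (lis ω).count u + if u = s i then 1 else 0 := by
  have hconj : s i * u * s i = MulAut.conj (s i) u := by simp
  rw [leftInvSeq_cons, count_cons, hconj,
    count_map_of_injective _ _ (MulAut.conj (s i)).injective, ← hconj]
  simp only [beq_iff_eq, eq_comm (a := s i), cs.simple_mul_mul_simple_eq_simple_iff]

theorem prod_map_signPerm_apply (ω : List B) (t : W) (e : ZMod 2) :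
    (ω.map cs.signPerm).prod (t, e) =
      (π ω * t * (π ω)⁻¹, e + (lis ω).count (π ω * t * (π ω)⁻¹)) := by
  induction ω with
  | nil => simp
  | cons i ω ih =>
    have hu : π (i :: ω) * t * (π (i :: ω))⁻¹ = s i * (π ω * t * (π ω)⁻¹) * s i := by
      simp [wordProd_cons, mul_assoc]
    rw [map_cons, prod_cons, Equiv.Perm.mul_apply, ih, hu, count_leftInvSeq_cons]
    simp [signPerm, signFlip, add_assoc]

theorem even_count_leftInvSeq_braid (i j : B) (t : W) :
    Even ((lis (alternatingWord i j (2 * M i j))).count t) := by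
  rw [← take_append_drop (M i j) (lis (alternatingWord i j (2 * M i j))),
    cs.leftInvSeq_braid_drop_eq_take, count_append]
  exact Even.add_self _

theorem isLiftable_signPerm : M.IsLiftable cs.signPerm := by
  intro i j
  have hπ : π (alternatingWord i j (2 * M i j)) = 1 := by
    rw [wordProd, prod_map_alternatingWord_two_mul, simple_mul_simple_pow]
  rw [← prod_map_alternatingWord_two_mul]
  ext ⟨t, e⟩ : 1
  obtain ⟨r, hr⟩ := cs.even_count_leftInvSeq_braid i j t
  rw [prod_map_signPerm_apply, hπ]
  simp [hr, ← two_mul, (by decide : (2 : ZMod 2) = 0)]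

def signRep : W →* Equiv.Perm (W × ZMod 2) := cs.lift ⟨cs.signPerm, cs.isLiftable_signPerm⟩

theorem signRep_wordProd (ω : List B) : cs.signRep (π ω) = (ω.map cs.signPerm).prod := by
  rw [wordProd, map_list_prod, map_map]
  congr 2
  exact funext (cs.lift_apply_simple cs.isLiftable_signPerm)

theorem natCast_count_leftInvSeq_eq {ω ω' : List B} (h : π ω = π ω') (t : W) :
    ((lis ω).count t : ZMod 2) = (lis ω').count t := by
  have key (ω : List B) : cs.signRep (π ω) ((π ω)⁻¹ * t * π ω, 0) = (t, ((lis ω).count t : ZMod 2)) := by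
    simp [signRep_wordProd, prod_map_signPerm_apply, mul_assoc]
  have := key ω'
  rw [← h, key ω] at this
  exact congrArg Prod.snd this

end SignRepresentation

theorem exists_wordProd_eraseIdx_eq_simple_mul {w : W} {i : B} (hi : cs.IsLeftDescent w i)
    {ω : List B} (hω : π ω = w) : ∃ j < ω.length, π (ω.eraseIdx j) = s i * w := by
  classical
  obtain ⟨τ, hτ, hτw⟩ := cs.exists_isReduced (s i * w)
  have hnot : s i ∉ lis τ := fun hmem => by
    have := (cs.isLeftInversion_of_mem_leftInvSeq hτ hmem).2
    rw [← hτw, simple_mul_simple_cancel_left] at this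
    exact lt_asymm hi this
  have hodd : ((lis ω).count (s i) : ZMod 2) = 1 := by
    have hcons : π (i :: τ) = π ω := by
      rw [wordProd_cons, ← hτw, simple_mul_simple_cancel_left, hω]
    have hcount := cs.count_leftInvSeq_cons i τ (s i)
    rw [simple_mul_simple_self, one_mul, count_eq_zero.mpr hnot, if_pos rfl] at hcount
    rw [← cs.natCast_count_leftInvSeq_eq hcons, hcount, Nat.cast_one]
  have hmem : s i ∈ lis ω := by
    refine count_pos_iff.mp (Nat.pos_of_ne_zero fun h0 => ?_)
    rw [h0, Nat.cast_zero] at hodd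
    exact zero_ne_one hodd
  obtain ⟨j, hj, hget⟩ := mem_iff_getElem.mp hmem
  refine ⟨j, by simpa using hj, ?_⟩
  rw [← getD_leftInvSeq_mul_wordProd, getD_eq_getElem _ _ hj, hget, hω]

theorem exists_sublist_isReduced (ω : List B) :
    ∃ ω', ω'.Sublist ω ∧ cs.IsReduced ω' ∧ π ω' = π ω := by
  induction hn : ω.length using Nat.strong_induction_on generalizing ω with
  | _ n ih =>
  subst hn
  cases ω with
  | nil => exact ⟨[], Sublist.refl _, by simp [IsReduced], rfl⟩
  | cons i ω =>
    obtain ⟨ω₁, hsub, hred, hprod⟩ := ih ω.length (by simp) ω rfl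
    rcases cs.length_simple_mul (π ω) i with hup | hdown
    · refine ⟨i :: ω₁, hsub.cons_cons i, ?_, by rw [wordProd_cons, wordProd_cons, hprod]⟩
      rw [IsReduced, wordProd_cons, hprod, hup, ← hprod, hred, length_cons]
    · obtain ⟨j, hj, hdel⟩ := cs.exists_wordProd_eraseIdx_eq_simple_mul
        (show cs.IsLeftDescent (π ω) i by unfold IsLeftDescent; omega) rfl
      obtain ⟨ω₂, hsub₂, hred₂, hprod₂⟩ :=
        ih (ω.eraseIdx j).length (by simp [length_eraseIdx, hj]) _ rfl
      exact ⟨ω₂, (hsub₂.trans (eraseIdx_sublist _ _)).cons i, hred₂,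
        by rw [hprod₂, hdel, wordProd_cons]⟩

def parabolicSubgroup (I : Set B) : Subgroup W := Subgroup.closure (cs.simple '' I)

theorem wordProd_mem_parabolicSubgroup {I : Set B} {ω : List B} (h : ∀ x ∈ ω, x ∈ I) :
    π ω ∈ cs.parabolicSubgroup I := by
  refine Subgroup.list_prod_mem _ fun _ hx => ?_
  obtain ⟨x, hxω, rfl⟩ := mem_map.mp hx
  exact Subgroup.subset_closure ⟨x, h x hxω, rfl⟩

theorem exists_isReduced_of_mem_parabolicSubgroup {I : Set B} {v : W}
    (hv : v ∈ cs.parabolicSubgroup I) : ∃ ω, cs.IsReduced ω ∧ (∀ x ∈ ω, x ∈ I) ∧ π ω = v := by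
  have hword : ∃ ω : List B, (∀ x ∈ ω, x ∈ I) ∧ π ω = v := by
    induction hv using Subgroup.closure_induction with
    | mem _ h =>
      obtain ⟨i, hi, rfl⟩ := h
      exact ⟨[i], by simpa using hi, by simp⟩
    | one => exact ⟨[], by simp, by simp⟩
    | mul _ _ _ _ h₁ h₂ =>
      obtain ⟨ω₁, h₁, rfl⟩ := h₁
      obtain ⟨ω₂, h₂, rfl⟩ := h₂
      exact ⟨ω₁ ++ ω₂, by simpa [or_imp, forall_and] using And.intro h₁ h₂, wordProd_append _ _ _⟩
    | inv _ _ h =>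
      obtain ⟨ω, h, rfl⟩ := h
      exact ⟨ω.reverse, by simpa using h, by simp⟩
  obtain ⟨ω, hI, rfl⟩ := hword
  obtain ⟨ω', hsub, hred, hprod⟩ := cs.exists_sublist_isReduced ω
  exact ⟨ω', hred, fun x hx => hI x (hsub.subset hx), hprod⟩

def IsMinimalInCoset (I : Set B) (x : W) : Prop :=
  ∀ d ∈ cs.parabolicSubgroup I, ℓ x ≤ ℓ (d * x)

theorem length_mul_of_isMinimalInCoset {I : Set B} {x v : W} (hx : cs.IsMinimalInCoset I x)
    (hv : v ∈ cs.parabolicSubgroup I) : ℓ (v * x) = ℓ v + ℓ x := by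
  obtain ⟨α, -, hαI, rfl⟩ := cs.exists_isReduced_of_mem_parabolicSubgroup hv
  obtain ⟨β, hβ, rfl⟩ := cs.exists_isReduced x
  obtain ⟨ρ, hsub, hρ, hprod⟩ := cs.exists_sublist_isReduced (α ++ β)
  obtain ⟨α', β', rfl, hα', hβ'⟩ := sublist_append_iff.mp hsub
  rw [wordProd_append, wordProd_append] at hprod
  have hα'P : π α' ∈ cs.parabolicSubgroup I :=
    cs.wordProd_mem_parabolicSubgroup fun y hy => hαI y (hα'.subset hy)
  have hβ'eq : π β' = ((π α')⁻¹ * π α) * π β := by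
    rw [mul_assoc, ← hprod]
    group
  have hlen : β'.length = β.length := by
    refine le_antisymm hβ'.length_le ?_
    calc β.length = ℓ (π β) := hβ.symm
      _ ≤ ℓ (π β') := hβ'eq ▸ hx _ (mul_mem (inv_mem hα'P) hv)
      _ ≤ β'.length := cs.length_wordProd_le _
  obtain rfl := hβ'.eq_of_length hlen
  have hα'eq : π α' = π α := mul_right_cancel hprod
  refine le_antisymm (cs.length_mul_le _ _) ?_
  calc ℓ (π α) + ℓ (π β') ≤ α'.length + β'.length := by
        rw [← hα'eq, hβ]
        exact Nat.add_le_add_right (cs.length_wordProd_le _) _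
    _ = ℓ (π α * π β') := by rw [← hprod, ← wordProd_append, hρ, length_append]

theorem exists_eq_mul_isMinimalInCoset (I : Set B) (z : W) :
    ∃ d ∈ cs.parabolicSubgroup I, ∃ x, cs.IsMinimalInCoset I x ∧ z = d * x := by
  classical
  have hex : ∃ n, ∃ d ∈ cs.parabolicSubgroup I, ℓ (d * z) = n := ⟨_, 1, one_mem _, rfl⟩
  obtain ⟨d, hd, hdz⟩ := Nat.find_spec hex
  refine ⟨d⁻¹, inv_mem hd, d * z, fun d' hd' => ?_, by group⟩
  rw [hdz, ← mul_assoc]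
  exact Nat.find_min' hex ⟨d' * d, mul_mem hd' hd, rfl⟩

theorem isMinimalInCoset_of_forall_not_isLeftDescent {I : Set B} {x : W}
    (h : ∀ i ∈ I, ¬ cs.IsLeftDescent x i) : cs.IsMinimalInCoset I x := by
  obtain ⟨d, hd, y, hy, rfl⟩ := cs.exists_eq_mul_isMinimalInCoset I x
  obtain ⟨_ | ⟨i, ω⟩, hω, hωI, rfl⟩ := cs.exists_isReduced_of_mem_parabolicSubgroup hd
  · simpa using hy
  · refine absurd ?_ (h i (hωI i mem_cons_self))
    have hωP : π ω ∈ cs.parabolicSubgroup I :=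
      cs.wordProd_mem_parabolicSubgroup fun y hy => hωI y (mem_cons_of_mem i hy)
    have hdrop : s i * (π (i :: ω) * y) = π ω * y := by
      rw [wordProd_cons, mul_assoc, simple_mul_simple_cancel_left]
    rw [IsLeftDescent, hdrop, cs.length_mul_of_isMinimalInCoset hy hωP,
      cs.length_mul_of_isMinimalInCoset hy hd, hω, length_cons]
    have := cs.length_wordProd_le ω
    omega

theorem wordProd_alternatingWord_inv_mul (i j : B) (L : ℕ) :
    (π (alternatingWord i j L))⁻¹ * π (alternatingWord j i L) = (s j * s i) ^ L := by
  induction L generalizing i j with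
  | zero => simp [alternatingWord]
  | succ L ih =>
    rw [alternatingWord_succ, alternatingWord_succ, wordProd_concat, wordProd_concat, mul_inv_rev,
      inv_simple, mul_assoc, ← mul_assoc _ (π _), ih, ← mul_assoc, ← mul_pow_mul, pow_succ,
      mul_assoc]

theorem concat_eq_alternatingWord_of_isReduced {i j : B} {ω : List B}
    (hω : cs.IsReduced (ω.concat j)) (hI : ∀ x ∈ ω, x = i ∨ x = j) :
    ω.concat j = alternatingWord i j (ω.length + 1) := by
  induction ω using List.reverseRecOn generalizing i j with
  | nil => rfl
  | append_singleton ω x ih =>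
    rcases hI x (by simp) with rfl | rfl
    · have hred : cs.IsReduced (ω.concat x) := by
        have h := hω.take (ω.length + 1)
        simp only [concat_eq_append] at h ⊢
        rwa [take_append_of_le_length (by simp), take_of_length_le (by simp)] at h
      rw [length_append, length_singleton, alternatingWord_succ,
        ← ih hred fun y hy => (hI y (by simp [hy])).symm]
      simp
    · exfalso
      have hπ : π ((ω ++ [x]).concat x) = π ω := by
        simp [wordProd_append, wordProd_cons]
      have := cs.length_wordProd_le ω
      rw [IsReduced, hπ] at hω
      simp at hω
      omega

theorem isOfFinOrder_simple_mul_simple_of_mem_parabolicSubgroup {i j : B} {d : W}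
    (hd : d ∈ cs.parabolicSubgroup {i, j}) (hi : cs.IsLeftDescent d i)
    (hj : cs.IsLeftDescent d j) : IsOfFinOrder (s i * s j) := by
  -- `d⁻¹` has reduced `{i, j}`-words ending in `i` and in `j`: the two alternating words of
  -- length `ℓ d`.
  have hword (x : B) (hx : x ∈ ({i, j} : Set B)) (hdx : cs.IsLeftDescent d x) :
      ∃ α : List B, (∀ y ∈ α, y = i ∨ y = j) ∧ cs.IsReduced (α.concat x) ∧
        π (α.concat x) = d⁻¹ ∧ α.length + 1 = ℓ d := by
    have hmem : d⁻¹ * s x ∈ cs.parabolicSubgroup {i, j} :=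
      mul_mem (inv_mem hd) (Subgroup.subset_closure ⟨x, hx, rfl⟩)
    obtain ⟨α, hα, hαI, hαd⟩ := cs.exists_isReduced_of_mem_parabolicSubgroup hmem
    have hlen : α.length + 1 = ℓ d := by
      rw [← hα, hαd, ← cs.inv_simple x, ← mul_inv_rev, length_inv, cs.isLeftDescent_iff.mp hdx]
    have hprod : π (α.concat x) = d⁻¹ := by
      rw [wordProd_concat, hαd, simple_mul_simple_cancel_right]
    refine ⟨α, hαI, ?_, hprod, hlen⟩
    rw [IsReduced, hprod, length_inv, length_concat, hlen]
  obtain ⟨α, hαI, hαred, hαprod, hαlen⟩ := hword i (by simp) hi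
  obtain ⟨β, hβI, hβred, hβprod, hβlen⟩ := hword j (by simp) hj
  rw [cs.concat_eq_alternatingWord_of_isReduced hαred fun y hy => (hαI y hy).symm, hαlen]
    at hαprod
  rw [cs.concat_eq_alternatingWord_of_isReduced hβred hβI, hβlen] at hβprod
  refine isOfFinOrder_iff_pow_eq_one.mpr ⟨ℓ d, by omega, ?_⟩
  rw [← wordProd_alternatingWord_inv_mul, hαprod, hβprod, inv_mul_cancel]

theorem isOfFinOrder_simple_mul_simple_of_isLeftDescent {i j : B} {w : W}
    (hi : cs.IsLeftDescent w i) (hj : cs.IsLeftDescent w j) : IsOfFinOrder (s i * s j) := by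
  obtain ⟨d, hd, x, hx, rfl⟩ := cs.exists_eq_mul_isMinimalInCoset {i, j} w
  have hdescent (k : B) (hk : k ∈ ({i, j} : Set B)) (hdk : cs.IsLeftDescent (d * x) k) :
      cs.IsLeftDescent d k := by
    have hkd : s k * d ∈ cs.parabolicSubgroup {i, j} :=
      mul_mem (Subgroup.subset_closure ⟨k, hk, rfl⟩) hd
    rw [IsLeftDescent, ← mul_assoc, cs.length_mul_of_isMinimalInCoset hx hkd,
      cs.length_mul_of_isMinimalInCoset hx hd] at hdk
    exact Nat.lt_of_add_lt_add_right hdk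
  exact cs.isOfFinOrder_simple_mul_simple_of_mem_parabolicSubgroup hd
    (hdescent i (by simp) hi) (hdescent j (by simp) hj)

theorem not_isOfFinOrder_simple_mul_simple {i j : B} (h : M i j = 0) :
    ¬ IsOfFinOrder (s i * s j) := by
  classical
  intro hfin
  obtain ⟨n, hn, hpow⟩ := isOfFinOrder_iff_pow_eq_one.mp hfin
  have hρ := congrArg (cs.lift ⟨_, M.isLiftable_dualReflectionPerm⟩) hpow
  rw [map_pow, map_mul, lift_apply_simple, lift_apply_simple, map_one] at hρ
  have hij : i ≠ j := by
    rintro rfl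
    simp at h
  have hCij := M.cosineForm_of_eq_zero h
  have hCji : M.cosineForm j i = -1 := by rw [M.cosineForm_comm, hCij]
  have horbit (k : ℕ) :
      (M.dualReflection i ∘ M.dualReflection j)^[k] (Pi.single i 1) i = 1 - 2 * k ∧
      (M.dualReflection i ∘ M.dualReflection j)^[k] (Pi.single i 1) j = 2 * k := by
    induction k with
    | zero => simp [hij.symm]
    | succ k ih =>
      simp only [Function.iterate_succ_apply', Function.comp_apply,
        CoxeterMatrix.dualReflection_apply, ih.1, ih.2, hCij, hCji, CoxeterMatrix.cosineForm_self]
      push_cast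
      constructor <;> ring
  have hfix : (M.dualReflection i ∘ M.dualReflection j)^[n] (Pi.single i 1) = Pi.single i 1 := by
    have := DFunLike.congr_fun hρ (Pi.single i 1)
    rwa [Equiv.Perm.coe_pow, Equiv.Perm.coe_mul, Equiv.Perm.one_apply] at this
  have hj := (horbit n).2
  rw [hfix, Pi.single_eq_of_ne hij.symm] at hj
  have : (0 : ℝ) < n := by exact_mod_cast hn
  linarith

end CoxeterSystem

theorem coneType_mul_eq_of_forall_length_mul {B W : Type*} [Group W] {M : CoxeterMatrix B}
    (cs : CoxeterSystem M W) {v w : W}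
    (h : ∀ z ∈ coneType cs w, cs.length (v * (w * z)) = cs.length v + cs.length (w * z)) :
    coneType cs (v * w) = coneType cs w := by
  have hw := h 1 (by simp [coneType])
  simp only [mul_one] at hw
  ext z
  simp only [coneType, Set.mem_ofPred_eq]
  constructor
  · intro hz
    have h₁ := cs.length_mul_le v (w * z)
    have h₂ := cs.length_mul_le w z
    rw [← mul_assoc] at h₁
    omega
  · intro hz
    rw [mul_assoc, h z hz, hz, hw, add_assoc]

theorem coneType_vu_classIV_two_infinite_general
    (n : ℕ)
    (M : CoxeterMatrix (Fin n))
    {W : Type*} [Group W] (cs : CoxeterSystem M W)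
    (a b c : Fin n)
    (htu : M b c = 0) (hus : M c a = 0) :
    ∀ v ∈ Subgroup.closure ({cs.simple a, cs.simple b} : Set W),
      coneType cs (v * cs.simple c) = coneType cs (cs.simple c) := by
  intro v hv
  have hvP : v ∈ cs.parabolicSubgroup {a, b} := by
    rwa [CoxeterSystem.parabolicSubgroup, Set.image_pair]
  have hinf : ∀ i ∈ ({a, b} : Set (Fin n)), ¬ IsOfFinOrder (cs.simple i * cs.simple c) := by
    rintro i (rfl | rfl)
    · exact cs.not_isOfFinOrder_simple_mul_simple (by rw [M.symmetric]; exact hus)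
    · exact cs.not_isOfFinOrder_simple_mul_simple htu
  refine coneType_mul_eq_of_forall_length_mul cs fun z hz =>
    cs.length_mul_of_isMinimalInCoset ?_ hvP
  refine cs.isMinimalInCoset_of_forall_not_isLeftDescent fun i hi hdesc => hinf i hi ?_
  refine cs.isOfFinOrder_simple_mul_simple_of_isLeftDescent hdesc ?_
  rw [CoxeterSystem.IsLeftDescent, cs.simple_mul_simple_cancel_left, hz, cs.length_simple]
  omega

theorem coneType_vu_classIV_two_infinite
    (n : ℕ) [NeZero n] (hn : 3 ≤ n) (k : Fin n → ℕ) (hk : ∀ i, 2 ≤ k i)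
    (hsum : ∑ i : Fin n, (1 : ℝ) / (k i : ℝ) < (n : ℝ) - 2)
    (M : CoxeterMatrix (Fin n))
    (hadj : ∀ i : Fin n, M i (i + 1) = k i)
    (hnonadj : ∀ i j : Fin n, i ≠ j → j ≠ i + 1 → i ≠ j + 1 → M i j = 0)
    {W : Type*} [Group W] (cs : CoxeterSystem M W)
    (a b c : Fin n) (hab : a ≠ b) (hbc : b ≠ c) (hac : a ≠ c)
    (hst : 2 ≤ M a b) (htu : M b c = 0) (hus : M c a = 0) :
    ∀ v ∈ Subgroup.closure ({cs.simple a, cs.simple b} : Set W),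
      coneType cs (v * cs.simple c) = coneType cs (cs.simple c) :=
  coneType_vu_classIV_two_infinite_general n M cs a b c htu hus
end
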